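/- Let P be a hereditary graph property. Then F_⊆(P) = F_≤(P) if and only if for every H ∈ F_⊆(P) and every pair e of nonadjacent vertices of H, there is some G ∈ F_⊆(P) such that G is an induced subgraph of H+e (the graph obtained from H by adding the edge e). -/

import Mathlib

attribute [local instance] Classical.propDecidable

open SimpleGraph

/-- A finite simple graph, bundled. -/
structure FGraph : Type 1 where
  V : Type
  [fin : Fintype V]
  graph : SimpleGraph V

attribute [instance] FGraph.fin

namespace FGraph

/-- `G.IsInduced H` : `G` is isomorphic to an induced subgraph of `H`. -/
def IsInduced (G H : FGraph) : Prop := Nonempty (G.graph ↪g H.graph)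

/-- `G.IsSub H` : `G` is isomorphic to a subgraph of `H`. -/
def IsSub (G H : FGraph) : Prop := ∃ f : G.graph →g H.graph, Function.Injective f

/-- `G.Iso H` : `G` and `H` are isomorphic. -/
def Iso (G H : FGraph) : Prop := Nonempty (G.graph ≃g H.graph)

/-- The induced subgraph of `G` on a set `s` of vertices. -/
noncomputable def induce (G : FGraph) (s : Set G.V) : FGraph := ⟨↥s, G.graph.induce s⟩

end FGraph

/-- A class of finite graphs. -/
abbrev GProp : Type 1 := FGraph → Prop

/-- A graph property: a nonempty isomorphism-closed class of finite graphs,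
each having at least one vertex. -/
structure IsGProp (P : GProp) : Prop where
  nonempty : ∃ G, P G
  vertexNonempty : ∀ G, P G → Nonempty G.V
  isoClosed : ∀ G H, G.Iso H → P G → P H

namespace GProp

/-- The product `P ∘ Q` of two classes of graphs. -/
def prod (P Q : GProp) : GProp := fun G =>
  Nonempty G.V ∧ ∃ s : Set G.V,
    (s.Nonempty → P (G.induce s)) ∧ ((sᶜ : Set G.V).Nonempty → Q (G.induce (sᶜ : Set G.V)))

/-- The product `∏ i, Ps i` of an indexed family of classes of graphs:
the vertex set is partitioned into the (possibly empty) preimages of a map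
to the index set, and every nonempty part must induce a graph in the
corresponding class. -/
def iProd {I : Type*} (Ps : I → GProp) : GProp := fun G =>
  Nonempty G.V ∧ ∃ f : G.V → I,
    ∀ i, (f ⁻¹' {i}).Nonempty → Ps i (G.induce (f ⁻¹' {i}))

end GProp

/-- Closed under induced subgraphs with at least one vertex. -/
def IndHereditary (P : GProp) : Prop :=
  ∀ G H : FGraph, P G → H.IsInduced G → Nonempty H.V → P H

/-- Closed under subgraphs with at least one vertex. -/
def Hereditary (P : GProp) : Prop :=
  ∀ G H : FGraph, P G → H.IsSub G → Nonempty H.V → P H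

/-- Closed under induced supergraphs. -/
def GeqHereditary (P : GProp) : Prop :=
  ∀ G H : FGraph, P H → H.IsInduced G → P G


/-- `F_⊆(P)`: minimal forbidden subgraphs of `P`, i.e. graphs `H ∉ P` all of
whose proper subgraphs (subgraphs not containing `H` back) are in `P`. -/
def ForbSub (P : GProp) : GProp := fun H =>
  Nonempty H.V ∧ ¬ P H ∧
    ∀ K : FGraph, Nonempty K.V → K.IsSub H → ¬ H.IsSub K → P K

/-- `F_≤(P)`: minimal forbidden induced subgraphs of `P`. -/
def ForbInd (P : GProp) : GProp := fun H =>
  Nonempty H.V ∧ ¬ P H ∧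
    ∀ K : FGraph, Nonempty K.V → K.IsInduced H → ¬ H.IsInduced K → P K

/-- `H + e`: the graph obtained from `H` by adding the edge `{a, b}`. -/
def addEdge (H : FGraph) (a b : H.V) : FGraph :=
  ⟨H.V, H.graph ⊔ SimpleGraph.fromEdgeSet {s(a, b)}⟩

/-!
Every graph of `F_⊆(P)` lies in `F_≤(P)`. Conversely, let `H ∈ F_≤(P)`. A copy inside `H` of a
graph outside `P` must use every vertex of `H`, since otherwise the induced subgraph on its
vertices would be a proper induced subgraph of `H` not in `P`. Choose a spanning subgraph `G'`
of `H` with `G' ∈ F_⊆(P)`, maximal under inclusion. If an edge `xy` of `H` were missing from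
`G'`, the hypothesis would give a graph of `F_⊆(P)` induced in `G' + xy ⊆ H`; it is spanning,
hence all of `G' + xy`, against maximality. So `H = G' ∈ F_⊆(P)`.

For the forward direction, `H + e ∉ P` contains some graph of `F_≤(P) = F_⊆(P)` as an induced
subgraph.
-/

open Function

lemma exists_minimal_below {α : Type*} (r : α → α → Prop) [IsPreorder α r] (μ : α → ℕ)
    (hμ : ∀ a b, r a b → ¬ r b a → μ a < μ b) {p : α → Prop} {a : α} (ha : p a) :
    ∃ b, r b a ∧ p b ∧ ∀ c, r c b → ¬ r b c → ¬ p c := by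
  obtain ⟨b, ⟨hba, hb⟩, hmin⟩ := (measure μ).wf.has_min {b | r b a ∧ p b} ⟨a, refl_of r a, ha⟩
  exact ⟨b, hba, hb, fun c hcb hbc hc => hmin c ⟨trans_of r hcb hba, hc⟩ (hμ c b hcb hbc)⟩

lemma SimpleGraph.Hom.mapDart_injective {V W : Type*} {G : SimpleGraph V} {H : SimpleGraph W}
    (f : G →g H) (hf : Injective f) : Injective f.mapDart := fun d d' h => by
  have h' := congrArg Dart.toProd h
  simp only [Hom.mapDart_apply, Prod.map, Prod.ext_iff, hf.eq_iff] at h'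
  exact Dart.ext _ _ (Prod.ext h'.1 h'.2)

namespace FGraph

instance : IsPreorder FGraph IsSub where
  refl _ := ⟨Hom.id, fun _ _ h => h⟩
  trans _ _ _ := fun ⟨f, hf⟩ ⟨g, hg⟩ => ⟨g.comp f, hg.comp hf⟩

instance : IsPreorder FGraph IsInduced where
  refl _ := ⟨Embedding.refl⟩
  trans _ _ _ := fun ⟨e⟩ ⟨f⟩ => ⟨f.comp e⟩

variable {G H : FGraph}

lemma IsInduced.isSub : G.IsInduced H → G.IsSub H := fun ⟨e⟩ => ⟨e.toHom, e.injective⟩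

lemma Iso.symm : G.Iso H → H.Iso G := fun ⟨e⟩ => ⟨e.symm⟩

lemma Iso.isInduced : G.Iso H → G.IsInduced H := fun ⟨e⟩ => ⟨e.toEmbedding⟩

lemma IsSub.card_le : G.IsSub H → Nat.card G.V ≤ Nat.card H.V :=
  fun ⟨f, hf⟩ => Nat.card_le_card_of_injective f hf

lemma IsSub.card_dart_le : G.IsSub H → Nat.card G.graph.Dart ≤ Nat.card H.graph.Dart :=
  fun ⟨f, hf⟩ => Nat.card_le_card_of_injective f.mapDart (f.mapDart_injective hf)

lemma IsInduced.iso_of_card_le (h : G.IsInduced H) (hV : Nat.card H.V ≤ Nat.card G.V) :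
    G.Iso H := by
  obtain ⟨e⟩ := h
  have hcard := le_antisymm (Nat.card_le_card_of_injective e e.injective) hV
  exact ⟨RelIso.ofSurjective e ((Nat.bijective_iff_injective_and_card e).2 ⟨e.injective, hcard⟩).2⟩

lemma IsSub.iso_of_card_le (h : G.IsSub H) (hV : Nat.card H.V ≤ Nat.card G.V)
    (hD : Nat.card H.graph.Dart ≤ Nat.card G.graph.Dart) : G.Iso H := by
  have hD' := le_antisymm h.card_dart_le hD
  obtain ⟨f, hf⟩ := h
  have hbij : Bijective f := (Nat.bijective_iff_injective_and_card f).2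
    ⟨hf, le_antisymm (Nat.card_le_card_of_injective f hf) hV⟩
  have hdart : Surjective f.mapDart := ((Nat.bijective_iff_injective_and_card _).2
    ⟨f.mapDart_injective hf, hD'⟩).2
  refine ⟨{ Equiv.ofBijective f hbij with map_rel_iff' := fun {x y} => ⟨fun hxy => ?_, f.map_adj⟩ }⟩
  obtain ⟨d, hd⟩ := hdart ⟨(f x, f y), hxy⟩
  have hd' := congrArg Dart.toProd hd
  simp only [Hom.mapDart_apply, Prod.map, Prod.ext_iff, hf.eq_iff] at hd'
  exact hd'.1 ▸ hd'.2 ▸ d.adj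

lemma IsInduced.card_lt (h : G.IsInduced H) (hHG : ¬ H.IsInduced G) :
    Nat.card G.V < Nat.card H.V :=
  lt_of_not_ge fun hle => hHG (h.iso_of_card_le hle).symm.isInduced

lemma IsSub.card_add_card_dart_lt (h : G.IsSub H) (hHG : ¬ H.IsSub G) :
    Nat.card G.V + Nat.card G.graph.Dart < Nat.card H.V + Nat.card H.graph.Dart := by
  have hV := h.card_le
  have hD := h.card_dart_le
  by_contra! hle
  exact hHG (h.iso_of_card_le (by omega) (by omega)).symm.isInduced.isSub

lemma IsInduced.isInduced_of_isSub (h : G.IsInduced H) (hHG : H.IsSub G) : H.IsInduced G :=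
  (h.iso_of_card_le hHG.card_le).symm.isInduced

end FGraph

variable {P : GProp} {G H : FGraph}

lemma exists_forbSub_isSub (hne : Nonempty H.V) (hH : ¬ P H) :
    ∃ G, ForbSub P G ∧ G.IsSub H := by
  obtain ⟨G, hGH, hG, hmin⟩ := exists_minimal_below FGraph.IsSub
    (fun K => Nat.card K.V + Nat.card K.graph.Dart)
    (fun _ _ => FGraph.IsSub.card_add_card_dart_lt) (p := fun K => Nonempty K.V ∧ ¬ P K)
    ⟨hne, hH⟩
  exact ⟨G, ⟨hG.1, hG.2, fun K hK hKG hGK => not_not.1 fun hPK => hmin K hKG hGK ⟨hK, hPK⟩⟩, hGH⟩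

lemma exists_forbInd_isInduced (hne : Nonempty H.V) (hH : ¬ P H) :
    ∃ G, ForbInd P G ∧ G.IsInduced H := by
  obtain ⟨G, hGH, hG, hmin⟩ := exists_minimal_below FGraph.IsInduced (fun K => Nat.card K.V)
    (fun _ _ => FGraph.IsInduced.card_lt) (p := fun K => Nonempty K.V ∧ ¬ P K)
    ⟨hne, hH⟩
  exact ⟨G, ⟨hG.1, hG.2, fun K hK hKG hGK => not_not.1 fun hPK => hmin K hKG hGK ⟨hK, hPK⟩⟩, hGH⟩

lemma ForbSub.forbInd (hH : ForbSub P H) : ForbInd P H :=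
  ⟨hH.1, hH.2.1, fun K hK hKH hHK =>
    hH.2.2 K hK hKH.isSub fun h => hHK (hKH.isInduced_of_isSub h)⟩

lemma ForbSub.of_iso (hher : Hereditary P) (hGH : G.Iso H) (hG : ForbSub P G) :
    ForbSub P H := by
  have hGH' := hGH.isInduced.isSub
  have hHG := hGH.symm.isInduced.isSub
  obtain ⟨e⟩ := hGH
  exact ⟨hG.1.map e, fun hPH => hG.2.1 (hher H G hPH hGH' hG.1), fun K hK hKH hHK =>
    hG.2.2 K hK (trans_of _ hKH hHG) fun hGK => hHK (trans_of _ hHG hGK)⟩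

lemma ForbInd.surjective_of_injective (hher : Hereditary P) (hH : ForbInd P H)
    (hne : Nonempty G.V) (hG : ¬ P G) {f : G.graph →g H.graph} (hf : Injective f) :
    Surjective f := by
  by_contra hs
  have hlt : Nat.card G.V < Nat.card H.V := lt_of_le_of_ne
    (Nat.card_le_card_of_injective f hf)
    fun h => hs ((Nat.bijective_iff_injective_and_card f).2 ⟨hf, h⟩).2
  set K := H.induce (Set.range f)
  have hKcard : Nat.card K.V = Nat.card G.V := Nat.card_range_of_injective hf
  have hHK : ¬ H.IsInduced K := fun h => by have := h.isSub.card_le; omega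
  have hPK : P K :=
    hH.2.2 K (hne.map fun v => ⟨f v, v, rfl⟩) ⟨Embedding.induce _⟩ hHK
  exact hG (hher K G hPK ⟨⟨fun v => ⟨f v, v, rfl⟩, f.map_adj⟩,
    fun u v h => hf (congrArg Subtype.val h)⟩ hne)

lemma exists_spanning_forbSub (hher : Hereditary P) (hH : ForbInd P H) :
    ∃ G' ≤ H.graph, ForbSub P ⟨H.V, G'⟩ := by
  obtain ⟨G, hG, f, hf⟩ := exists_forbSub_isSub hH.1 hH.2.1
  let e := Equiv.ofBijective f ⟨hf, hH.surjective_of_injective hher hG.1 hG.2.1 hf⟩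
  exact ⟨G.graph.map e.toEmbedding, (map_le_iff_le_comap _ _ _).2 fun _ _ h => f.map_adj h,
    hG.of_iso hher ⟨Iso.map e G.graph⟩⟩

lemma forbSub_addEdge_of_le (hher : Hereditary P) (hH : ForbInd P H) {G' : SimpleGraph H.V}
    (hG' : G' ≤ H.graph) {x y : H.V} (hxy : H.graph.Adj x y)
    (hG : ∃ G, ForbSub P G ∧ G.IsInduced (addEdge ⟨H.V, G'⟩ x y)) :
    ForbSub P (addEdge ⟨H.V, G'⟩ x y) := by
  obtain ⟨G, hG, ⟨e⟩⟩ := hG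
  have hle : G' ⊔ edge x y ≤ H.graph := sup_le hG' ((H.graph.edge_le_iff).2 (Or.inr hxy))
  have hs : Surjective ((Hom.ofLE hle).comp e.toHom) :=
    hH.surjective_of_injective hher hG.1 hG.2.1 e.injective
  exact hG.of_iso hher ⟨RelIso.ofSurjective e hs⟩

lemma ForbInd.forbSub (hher : Hereditary P)
    (hcond : ∀ H, ForbSub P H → ∀ a b : H.V, a ≠ b → ¬ H.graph.Adj a b →
      ∃ G, ForbSub P G ∧ G.IsInduced (addEdge H a b))
    (hH : ForbInd P H) : ForbSub P H := by
  obtain ⟨G', hmax⟩ := (Set.toFinite {G' | G' ≤ H.graph ∧ ForbSub P ⟨H.V, G'⟩}).exists_maximal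
    (exists_spanning_forbSub hher hH)
  obtain ⟨hle, hG'⟩ := hmax.prop
  obtain rfl | hlt := hle.eq_or_lt
  · exact hG'
  obtain ⟨x, y, hxy, hnxy⟩ : ∃ x y, H.graph.Adj x y ∧ ¬ G'.Adj x y := by
    by_contra! h
    exact hlt.not_ge fun x y => h x y
  have hlt' : G' < G' ⊔ edge x y := G'.lt_sup_edge x y hxy.ne hnxy
  exact (hmax.not_gt ⟨sup_le hle ((H.graph.edge_le_iff).2 (Or.inr hxy)),
    forbSub_addEdge_of_le hher hH hle hxy (hcond _ hG' x y hxy.ne hnxy)⟩ hlt').elim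

theorem statement_9_general (P : GProp) (hher : Hereditary P) :
    ForbSub P = ForbInd P ↔
      ∀ H, ForbSub P H → ∀ a b : H.V, a ≠ b → ¬ H.graph.Adj a b →
        ∃ G, ForbSub P G ∧ G.IsInduced (addEdge H a b) := by
  refine ⟨fun hEq H hH a b _ _ => ?_, fun hcond => ?_⟩
  · have hnP : ¬ P (addEdge H a b) := fun hPab =>
      hH.2.1 (hher _ H hPab ⟨Hom.ofLE le_sup_left, injective_id⟩ hH.1)
    obtain ⟨G, hG, hGH⟩ := exists_forbInd_isInduced (H := addEdge H a b) hH.1 hnP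
    exact ⟨G, hEq ▸ hG, hGH⟩
  · funext H
    exact propext ⟨ForbSub.forbInd, ForbInd.forbSub hher hcond⟩

/-- for a hereditary graph property `P`, `F_⊆(P) = F_≤(P)` iff for
every `H ∈ F_⊆(P)` and every pair `a ≠ b` of nonadjacent vertices of `H`,
some `G ∈ F_⊆(P)` is an induced subgraph of `H + ab`. -/
theorem statement_9 (P : GProp) (hP : IsGProp P) (hher : Hereditary P) :
    ForbSub P = ForbInd P ↔
      ∀ H, ForbSub P H → ∀ a b : H.V, a ≠ b → ¬ H.graph.Adj a b →
        ∃ G, ForbSub P G ∧ G.IsInduced (addEdge H a b) :=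
  statement_9_general P hher
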